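/- Let G be a finitely presented indicable group not containing a free subsemigroup of rank 2. Then G is isomorphic to a semidirect product H ⋊ ℤ where H admits an ascending finite endomorphic presentation. -/

import Mathlib

/-- `K` has an ascending finite endomorphic presentation (finite L-presentation):
`K ≅ F(X)/⟨⟨⋃_{φ ∈ Φ*} φ(R)⟩⟩` with `X`, `R`, `Φ` finite, where `Φ*` is the monoid
generated by `Φ` under composition. -/
def HasAscendingFiniteLPresentation (K : Type*) [Group K] : Prop :=
  ∃ (n : ℕ) (R : Finset (FreeGroup (Fin n)))
    (Φ : Finset (Monoid.End (FreeGroup (Fin n)))),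
    Nonempty (K ≃* FreeGroup (Fin n) ⧸ Subgroup.normalClosure
      {w : FreeGroup (Fin n) |
        ∃ φ ∈ Submonoid.closure (Φ : Set (Monoid.End (FreeGroup (Fin n)))),
          ∃ r ∈ R, w = φ r})

/-- `G` is finitely presented. -/
def IsFinitelyPresentedGroup (G : Type*) [Group G] : Prop :=
  ∃ (n : ℕ) (R : Finset (FreeGroup (Fin n))),
    Nonempty (G ≃* FreeGroup (Fin n) ⧸
      Subgroup.normalClosure (R : Set (FreeGroup (Fin n))))

/-!
Let `f : G → ℤ` be onto with `f t = 1` and `H = ker f`, so that `G ≅ H ⋊ ℤ` with `t` acting by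
conjugation. For `a ∈ H` and `f b ≠ 0`, the elements `a b` and `b` do not generate a free
subsemigroup, so two distinct words in them are equal; comparing them shows that `a` lies in the
subgroup generated by finitely many `bⁿ a b⁻ⁿ` with `n ≥ 1`. For a finite generating set `S` of
`G`, `H` is generated by the `t`-conjugates of the `g t^(-f g)`, `g ∈ S`; applying the above with
`b = t` and `b = t⁻¹` shows that finitely many of these conjugates suffice.

Lift conjugation by `t` and `t⁻¹` to endomorphisms `φ₁, φ₂` of a free group `F` mapping onto `H`.
Modulo the `{φ₁, φ₂}`-orbit of the relators `φ₁ φ₂ x = x`, `φ₂ φ₁ x = x` they induce an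
automorphism `β` of a quotient `Q` of `F`, and `Q ⋊_β ℤ → H ⋊ ℤ ≅ G` is a surjection from a
finitely generated group onto a finitely presented one. Its kernel is the normal closure of
finitely many elements of `Q`, and their lifts to `F`, together with the relators above, give an
ascending finite L-presentation of `H` with `Φ = {φ₁, φ₂}`.
-/

open Subgroup

theorem map_mem_closure_of_mapsTo {G H : Type*} [Group G] [Group H] (φ : G →* H) {S : Set G}
    {T : Set H} (h : Set.MapsTo φ S (closure T)) {y : G} (hy : y ∈ closure S) :
    φ y ∈ closure T := by
  have : (closure S).map φ ≤ closure T := by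
    rw [MonoidHom.map_closure, closure_le]
    exact h.image_subset
  exact this (mem_map_of_mem φ hy)

theorem conj_zpow_conj_zpow {G : Type*} [Group G] (t x : G) (j k : ℤ) :
    MulAut.conj (t ^ j) (MulAut.conj (t ^ k) x) = MulAut.conj (t ^ (j + k)) x := by
  rw [zpow_add, map_mul, MulAut.mul_apply]

theorem conj_pow_conj_pow {G : Type*} [Group G] (b x : G) (m n : ℕ) :
    MulAut.conj (b ^ m) (MulAut.conj (b ^ n) x) = MulAut.conj (b ^ (m + n)) x := by
  rw [pow_add, map_mul, MulAut.mul_apply]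

theorem MulAut.zpow_apply_mem {Q : Type*} [Group Q] {β : MulAut Q} {M : Subgroup Q}
    (h : ∀ m ∈ M, β m ∈ M) (h' : ∀ m ∈ M, β⁻¹ m ∈ M) (n : ℤ) : ∀ m ∈ M, (β ^ n) m ∈ M := by
  induction n using Int.induction_on with
  | zero => intro m hm; simpa using hm
  | succ n ih => exact fun m hm => by rw [zpow_add_one, MulAut.mul_apply]; exact ih _ (h m hm)
  | pred n ih => exact fun m hm => by rw [zpow_sub_one, MulAut.mul_apply]; exact ih _ (h' m hm)

theorem MonoidHom.apply_zpow_apply_of_apply {Q K : Type*} [Group Q] [Group K] (θ : Q →* K)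
    {β : MulAut Q} {σ : MulAut K} (h : ∀ q, θ (β q) = σ (θ q)) (n : ℤ) (q : Q) :
    θ ((β ^ n) q) = (σ ^ n) (θ q) := by
  have h' (q : Q) : θ (β⁻¹ q) = σ⁻¹ (θ q) := by
    have := h (β⁻¹ q)
    rw [MulAut.apply_inv_self] at this
    rw [this, MulAut.inv_apply_self]
  induction n using Int.induction_on generalizing q with
  | zero => simp
  | succ n ih => rw [zpow_add_one, zpow_add_one, MulAut.mul_apply, MulAut.mul_apply, ih, h]
  | pred n ih => rw [zpow_sub_one, zpow_sub_one, MulAut.mul_apply, MulAut.mul_apply, ih, h']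

theorem FreeGroup.exists_comp_eq_of_surjective {α H K : Type*} [Group H] [Group K] {q : H →* K}
    (hq : Function.Surjective q) (g : FreeGroup α →* K) : ∃ ψ : FreeGroup α →* H, q.comp ψ = g :=
  ⟨FreeGroup.lift fun a => Function.surjInv hq (g (FreeGroup.of a)),
    FreeGroup.ext_hom _ _ fun a => by simp [Function.surjInv_eq hq]⟩

theorem Group.FG.exists_freeGroup_fin_surjective {G : Type*} [Group G] [Group.FG G] :
    ∃ (n : ℕ) (π : FreeGroup (Fin n) →* G), Function.Surjective π := by
  obtain ⟨α, _, π, hπ⟩ := Group.fg_iff_exists_freeGroup_hom_surjective_finite.1 ‹_›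
  obtain ⟨n, ⟨e⟩⟩ := Finite.exists_equiv_fin α
  exact ⟨n, π.comp (FreeGroup.freeGroupCongr e).symm.toMonoidHom,
    hπ.comp (FreeGroup.freeGroupCongr e).symm.surjective⟩

theorem FreeSemigroup.lift_eq_prod_map {α M : Type*} [Monoid M] (c : α → M)
    (x : FreeSemigroup α) : FreeSemigroup.lift c x = ((x.head :: x.tail).map c).prod := by
  have : (FreeMonoid.lift c).toMulHom.comp FreeSemigroup.toFreeMonoid = FreeSemigroup.lift c :=
    FreeSemigroup.hom_ext (by ext; simp)
  cases x
  rw [← this]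
  simp [FreeSemigroup.toFreeMonoid_mk_eq_cons, FreeMonoid.lift_apply]

namespace SemidirectProduct

variable {N Γ : Type*} [Group N] [Group Γ] {φ : Γ →* MulAut N}

instance fg [Group.FG N] [Group.FG Γ] : Group.FG (N ⋊[φ] Γ) := by
  obtain ⟨S, hS, hSfin⟩ := Group.fg_iff.1 ‹Group.FG N›
  obtain ⟨T, hT, hTfin⟩ := Group.fg_iff.1 ‹Group.FG Γ›
  refine Group.fg_iff.2 ⟨inl '' S ∪ inr '' T, eq_top_iff.2 fun p _ => ?_,
    (hSfin.image _).union (hTfin.image _)⟩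
  rw [← inl_left_mul_inr_right p]
  exact mul_mem
    (map_mem_closure_of_mapsTo inl (fun s hs => subset_closure (Or.inl ⟨s, hs, rfl⟩))
      (hS ▸ mem_top p.left))
    (map_mem_closure_of_mapsTo inr (fun s hs => subset_closure (Or.inr ⟨s, hs, rfl⟩))
      (hT ▸ mem_top p.right))

theorem normal_map_inl {M : Subgroup N} [M.Normal] (hM : ∀ g, ∀ m ∈ M, φ g m ∈ M) :
    (M.map (inl : N →* N ⋊[φ] Γ)).Normal := by
  constructor
  rintro _ ⟨m, hm, rfl⟩ p
  refine ⟨p.left * φ p.right m * p.left⁻¹, ‹M.Normal›.conj_mem _ (hM _ _ hm) _, ?_⟩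
  ext <;> simp

theorem map_surjective {N₂ Γ₂ : Type*} [Group N₂] [Group Γ₂] {φ₂ : Γ₂ →* MulAut N₂}
    {fn : N →* N₂} {fg : Γ →* Γ₂}
    (h : ∀ g : Γ, fn.comp (φ g).toMonoidHom = (φ₂ (fg g)).toMonoidHom.comp fn)
    (hn : Function.Surjective fn) (hg : Function.Surjective fg) :
    Function.Surjective (map fn fg h) := by
  intro p
  obtain ⟨a, ha⟩ := hn p.left
  obtain ⟨b, hb⟩ := hg p.right
  exact ⟨⟨a, b⟩, by ext <;> simp [ha, hb]⟩

end SemidirectProduct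

noncomputable def MonoidHom.kerSemidirectProductMulEquiv {G Q : Type*} [Group G] [Group Q]
    (f : G →* Q) (s : Q →* G) (hs : Function.RightInverse s f) :
    f.ker ⋊[MulAut.conjNormal.comp s] Q ≃* G :=
  let S : GroupExtension f.ker G Q :=
    { inl := f.ker.subtype
      rightHom := f
      inl_injective := f.ker.subtype_injective
      range_inl_eq_ker_rightHom := f.ker.range_subtype
      rightHom_surjective := hs.surjective }
  let σ : S.Splitting := ⟨s, hs⟩
  (SemidirectProduct.congr (MulEquiv.refl _) (MulEquiv.refl _) fun q => by
    ext n
    exact (S.inl_conjAct_comm (e := s q) (n := n)).symm).trans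
    σ.semidirectProductMulEquiv

theorem IsFinitelyPresentedGroup.isFinitelyPresented {G : Type*} [Group G]
    (hG : IsFinitelyPresentedGroup G) : Group.IsFinitelyPresented G := by
  obtain ⟨n, R, ⟨e⟩⟩ := hG
  refine ⟨n, e.symm.toMonoidHom.comp (QuotientGroup.mk' _),
    e.symm.surjective.comp (QuotientGroup.mk'_surjective _), R, R.finite_toSet, ?_⟩
  ext w
  simp

namespace Group.IsFinitelyPresented

variable {G : Type*} [Group G] [Group.IsFinitelyPresented G]

theorem fg : Group.FG G := by
  obtain ⟨n, φ, hφ, -⟩ := ‹Group.IsFinitelyPresented G›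
  exact Group.fg_of_surjective hφ

theorem ker_freeGroup_isFinitelyNormallyGenerated {α : Type*} [Finite α]
    {ρ : FreeGroup α →* G} (hρ : Function.Surjective ρ) : ρ.ker.IsFinitelyNormallyGenerated := by
  obtain ⟨n, φ, hφ, R, hR, hker⟩ := ‹Group.IsFinitelyPresented G›
  obtain ⟨u, hu⟩ := FreeGroup.exists_comp_eq_of_surjective hφ ρ
  obtain ⟨v, hv⟩ := FreeGroup.exists_comp_eq_of_surjective hρ φ
  have hu' (w) : φ (u w) = ρ w := DFunLike.congr_fun hu w
  have hv' (w) : ρ (v w) = φ w := DFunLike.congr_fun hv w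
  -- Tietze: modulo `normalClosure T`, `v ∘ u` is the identity and `v` kills the relators `R`.
  set T := v '' R ∪ Set.range fun a => FreeGroup.of a * (v (u (FreeGroup.of a)))⁻¹
  refine ⟨T, (hR.image v).union (Set.finite_range _), le_antisymm ?_ fun w hw => ?_⟩
  · refine normalClosure_le_normal ?_
    rintro _ (⟨r, hr, rfl⟩ | ⟨a, rfl⟩)
    · have : r ∈ φ.ker := hker ▸ subset_normalClosure hr
      simpa [hv'] using this
    · simp [hv', hu']
  · have hvu : (QuotientGroup.mk' (normalClosure T)).comp (v.comp u) =
        QuotientGroup.mk' (normalClosure T) := by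
      refine FreeGroup.ext_hom _ _ fun a => ?_
      simp only [MonoidHom.comp_apply, QuotientGroup.mk'_apply]
      rw [eq_comm, QuotientGroup.eq_iff_div_mem, div_eq_mul_inv]
      exact subset_normalClosure (Or.inr ⟨a, rfl⟩)
    have huw : u w ∈ normalClosure R := hker ▸ (by simpa [hu'] using hw)
    have hvuw : v (u w) ∈ normalClosure T :=
      (map_normalClosure_le R v).trans (normalClosure_mono Set.subset_union_left) ⟨u w, huw, rfl⟩
    rw [← QuotientGroup.eq_one_iff, ← QuotientGroup.mk'_apply, ← hvu]
    simpa using hvuw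

theorem ker_isFinitelyNormallyGenerated {H : Type*} [Group H] [Group.FG H] {Θ : H →* G}
    (hΘ : Function.Surjective Θ) : Θ.ker.IsFinitelyNormallyGenerated := by
  obtain ⟨α, _, ρ, hρ⟩ := Group.fg_iff_exists_freeGroup_hom_surjective_finite.1 ‹Group.FG H›
  have := (ker_freeGroup_isFinitelyNormallyGenerated (hΘ.comp hρ) (ρ := Θ.comp ρ)).map hρ
  rwa [← MonoidHom.comap_ker, map_comap_eq_self_of_surjective hρ] at this

end Group.IsFinitelyPresented

/-- The kernel of `Q ⋊[ψ] Γ → K ⋊[α] Γ` is `ker θ ⊆ Q`; it is finitely normally generated since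
`K ⋊[α] Γ` is finitely presented, and normal subgroups of `Q ⋊[ψ] Γ` inside `Q` are the
`ψ`-invariant normal subgroups of `Q`. -/
theorem exists_finite_ker_le_of_invariant_normal {Q K Γ : Type*} [Group Q] [Group K] [Group Γ]
    [Group.FG Q] [Group.FG Γ] {ψ : Γ →* MulAut Q} {α : Γ →* MulAut K}
    [Group.IsFinitelyPresented (K ⋊[α] Γ)] {θ : Q →* K} (hθ : Function.Surjective θ)
    (hcompat : ∀ g q, θ (ψ g q) = α g (θ q)) :
    ∃ T : Set Q, T.Finite ∧ T ⊆ θ.ker ∧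
      ∀ M : Subgroup Q, M.Normal → (∀ g, ∀ m ∈ M, ψ g m ∈ M) → T ⊆ M → θ.ker ≤ M := by
  set Θ := SemidirectProduct.map θ (MonoidHom.id Γ) fun g => MonoidHom.ext (hcompat g)
  have hΘ : Function.Surjective Θ := SemidirectProduct.map_surjective _ hθ fun g => ⟨g, rfl⟩
  obtain ⟨T, hTfin, hT⟩ := Group.IsFinitelyPresented.ker_isFinitelyNormallyGenerated hΘ
  have hTker (p) (hp : p ∈ T) : p.right = 1 ∧ θ p.left = 1 := by
    have : p ∈ Θ.ker := hT ▸ subset_normalClosure hp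
    rw [MonoidHom.mem_ker] at this
    exact ⟨congrArg SemidirectProduct.right this, congrArg SemidirectProduct.left this⟩
  refine ⟨SemidirectProduct.left '' T, hTfin.image _, ?_, fun M hM hinv hTM q hq => ?_⟩
  · rintro _ ⟨p, hp, rfl⟩
    exact (hTker p hp).2
  · have hTM' : T ⊆ M.map (SemidirectProduct.inl : Q →* Q ⋊[ψ] Γ) := fun p hp =>
      ⟨p.left, hTM ⟨p, hp, rfl⟩, by ext <;> simp [(hTker p hp).1]⟩
    have := SemidirectProduct.normal_map_inl (Γ := Γ) hinv
    have hle : Θ.ker ≤ M.map SemidirectProduct.inl := hT ▸ normalClosure_le_normal hTM'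
    have hq' : SemidirectProduct.inl q ∈ Θ.ker := by
      simp [Θ, SemidirectProduct.map_inl, MonoidHom.mem_ker.1 hq]
    exact (mem_map_iff_mem SemidirectProduct.inl_injective).1 (hle hq')

section WordProd

variable {G : Type*} [Group G] {a b : G}

def wordProd (a b : G) (w : List Bool) : G := (w.map fun s => cond s (a * b) b).prod

@[simp]
theorem wordProd_nil : wordProd a b [] = 1 := rfl

@[simp]
theorem wordProd_cons (s : Bool) (w : List Bool) :
    wordProd a b (s :: w) = cond s (a * b) b * wordProd a b w := List.prod_cons

theorem map_wordProd {f : G →* Multiplicative ℤ} (ha : f a = 1) (w : List Bool) :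
    f (wordProd a b w) = f b ^ w.length := by
  induction w with
  | nil => simp
  | cons s w ih => cases s <;> simp [ih, ha, pow_succ']

theorem length_eq_of_wordProd_eq {f : G →* Multiplicative ℤ} (ha : f a = 1) (hb : f b ≠ 1)
    {w₁ w₂ : List Bool} (h : wordProd a b w₁ = wordProd a b w₂) : w₁.length = w₂.length := by
  have hinj := injective_pow_iff_not_isOfFinOrder.mpr ((isOfFinOrder_iff_eq_one _).not.mpr hb)
  exact hinj (by simpa only [map_wordProd ha] using congrArg f h)

theorem conj_mem_closure_conj_pow_Ici {y : G}
    (hy : y ∈ closure (Set.range fun n : ℕ => MulAut.conj (b ^ n) a)) :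
    MulAut.conj b y ∈ closure ((fun n : ℕ => MulAut.conj (b ^ n) a) '' Set.Ici 1) := by
  refine map_mem_closure_of_mapsTo (MulAut.conj b : G →* G) ?_ hy
  rintro _ ⟨n, rfl⟩
  exact subset_closure ⟨1 + n, by simp,
    by simp only [MonoidHom.coe_coe, ← conj_pow_conj_pow, pow_one]⟩

theorem wordProd_mul_inv_pow_mem_closure (w : List Bool) :
    wordProd a b w * (b ^ w.length)⁻¹ ∈
      closure (Set.range fun n : ℕ => MulAut.conj (b ^ n) a) := by
  induction w with
  | nil => simp
  | cons s w ih =>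
    have key : wordProd a b (s :: w) * (b ^ (s :: w).length)⁻¹ =
        cond s a 1 * MulAut.conj b (wordProd a b w * (b ^ w.length)⁻¹) := by
      cases s <;> simp [pow_succ', mul_assoc]
    rw [key]
    refine mul_mem ?_ (closure_mono (Set.image_subset_range _ _)
      (conj_mem_closure_conj_pow_Ici ih))
    cases s
    · exact one_mem _
    · exact subset_closure ⟨0, by simp⟩

variable {f : G →* Multiplicative ℤ}

theorem mem_closure_conj_pow_of_wordProd_true_eq_false (ha : f a = 1) (hb : f b ≠ 1)
    {w₁ w₂ : List Bool} (h : wordProd a b (true :: w₁) = wordProd a b (false :: w₂)) :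
    a ∈ closure ((fun n : ℕ => MulAut.conj (b ^ n) a) '' Set.Ici 1) := by
  have hlen : w₁.length = w₂.length := by simpa using length_eq_of_wordProd_eq ha hb h
  have hw₂ : wordProd a b w₂ = b⁻¹ * (a * b * wordProd a b w₁) := by
    simp only [wordProd_cons, cond_true, cond_false] at h
    rw [h, inv_mul_cancel_left]
  have ha_eq : a = MulAut.conj b (wordProd a b w₂ * (b ^ w₂.length)⁻¹ *
      (wordProd a b w₁ * (b ^ w₁.length)⁻¹)⁻¹) := by
    rw [hw₂, hlen, MulAut.conj_apply]
    group
  have := conj_mem_closure_conj_pow_Ici (a := a) (b := b)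
    (mul_mem (wordProd_mul_inv_pow_mem_closure w₂) (inv_mem (wordProd_mul_inv_pow_mem_closure w₁)))
  rwa [← ha_eq] at this

theorem mem_closure_conj_pow_of_wordProd_eq (ha : f a = 1) (hb : f b ≠ 1) :
    ∀ {w₁ w₂ : List Bool}, wordProd a b w₁ = wordProd a b w₂ → w₁ ≠ w₂ →
      a ∈ closure ((fun n : ℕ => MulAut.conj (b ^ n) a) '' Set.Ici 1)
  | [], _, h, hne =>
    (hne (List.eq_nil_of_length_eq_zero (length_eq_of_wordProd_eq ha hb h).symm).symm).elim
  | _ :: _, [], h, _ => absurd (length_eq_of_wordProd_eq ha hb h) (by simp)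
  | s₁ :: w₁, s₂ :: w₂, h, hne => by
    by_cases hs : s₁ = s₂
    · subst hs
      exact mem_closure_conj_pow_of_wordProd_eq ha hb (by simpa using h) (by simpa using hne)
    · cases s₁ <;> cases s₂
      · exact absurd rfl hs
      · exact mem_closure_conj_pow_of_wordProd_true_eq_false ha hb h.symm
      · exact mem_closure_conj_pow_of_wordProd_true_eq_false ha hb h
      · exact absurd rfl hs

theorem exists_mem_closure_conj_pow_Icc (ha : f a = 1) (hb : f b ≠ 1)
    (hnotinj : ¬ Function.Injective (wordProd a b)) :
    ∃ N : ℕ, a ∈ closure ((fun n : ℕ => MulAut.conj (b ^ n) a) '' Set.Icc 1 N) := by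
  obtain ⟨w₁, w₂, h, hne⟩ : ∃ w₁ w₂, wordProd a b w₁ = wordProd a b w₂ ∧ w₁ ≠ w₂ := by
    simpa [Function.Injective] using hnotinj
  have hmem := mem_closure_conj_pow_of_wordProd_eq ha hb h hne
  rw [← Set.iUnion_Icc_right, Set.image_iUnion, Subgroup.closure_iUnion] at hmem
  exact (mem_iSup_of_directed (Monotone.directed_le fun M N hMN =>
    closure_mono (Set.image_mono (Set.Icc_subset_Icc_right hMN)))).mp hmem

end WordProd

theorem not_injective_wordProd {G : Type*} [Group G]
    (hnofree : ∀ φ : FreeSemigroup Bool →ₙ* G, ¬ Function.Injective φ) (a b : G) :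
    ¬ Function.Injective (wordProd a b) := by
  intro hinj
  refine hnofree (FreeSemigroup.lift fun s => cond s (a * b) b) fun x y hxy => ?_
  rw [FreeSemigroup.lift_eq_prod_map, FreeSemigroup.lift_eq_prod_map] at hxy
  obtain ⟨hh, ht⟩ := List.cons_eq_cons.mp (hinj hxy)
  exact FreeSemigroup.ext hh ht

section KernelGenerators

variable {G : Type*} [Group G]

theorem conj_zpow_mem_closure_Icc {t x : G} {N : ℕ}
    (hup : x ∈ closure ((fun k : ℤ => MulAut.conj (t ^ k) x) '' Set.Icc 1 N))
    (hdown : x ∈ closure ((fun k : ℤ => MulAut.conj (t ^ k) x) '' Set.Icc (-N) (-1))) (k : ℤ) :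
    MulAut.conj (t ^ k) x ∈ closure ((fun k : ℤ => MulAut.conj (t ^ k) x) '' Set.Icc (-N) N) := by
  set c : ℤ → G := fun k => MulAut.conj (t ^ k) x
  set B := closure (c '' Set.Icc (-N) N)
  have shift (k : ℤ) {I : Set ℤ} (hx : x ∈ closure (c '' I)) (hI : ∀ m ∈ I, c (k + m) ∈ B) :
      c k ∈ B := by
    have hmaps : Set.MapsTo (MulAut.conj (t ^ k) : G →* G) (c '' I) B := by
      rintro _ ⟨m, hm, rfl⟩
      rw [SetLike.mem_coe, MonoidHom.coe_coe, conj_zpow_conj_zpow]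
      exact hI m hm
    simpa only [MonoidHom.coe_coe] using map_mem_closure_of_mapsTo _ hmaps hx
  -- For `|k| > N`, `hdown` (if `k > 0`) or `hup` (if `k < 0`) moves `c k` closer to `c 0`.
  suffices ∀ n : ℕ, ∀ k : ℤ, k.natAbs = n → c k ∈ B from this _ k rfl
  intro n
  induction n using Nat.strong_induction_on with
  | _ n ih =>
    intro k hk
    by_cases hkN : k.natAbs ≤ N
    · exact subset_closure ⟨k, ⟨by omega, by omega⟩, rfl⟩
    rcases lt_or_gt_of_ne (show k ≠ 0 by omega) with hneg | hpos
    · exact shift k hup fun m hm => ih _ (by have := hm.1; have := hm.2; omega) _ rfl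
    · exact shift k hdown fun m hm => ih _ (by have := hm.1; have := hm.2; omega) _ rfl

theorem ker_eq_closure_conj_zpow {f : G →* Multiplicative ℤ} {t : G}
    (ht : f t = Multiplicative.ofAdd 1) {S : Set G} (hS : closure S = ⊤) :
    f.ker = closure {y | ∃ g ∈ S, ∃ k : ℤ,
      y = MulAut.conj (t ^ k) (g * (t ^ (f g).toAdd)⁻¹)} := by
  set W := closure {y | ∃ g ∈ S, ∃ k : ℤ, y = MulAut.conj (t ^ k) (g * (t ^ (f g).toAdd)⁻¹)}
  have hft (n : ℤ) : f (t ^ n) = Multiplicative.ofAdd n := by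
    rw [map_zpow, ht, ← ofAdd_zsmul, smul_eq_mul, mul_one]
  have hconj (j : ℤ) {y : G} (hy : y ∈ W) : MulAut.conj (t ^ j) y ∈ W := by
    refine map_mem_closure_of_mapsTo (MulAut.conj (t ^ j) : G →* G) ?_ hy
    rintro _ ⟨g, hg, k, rfl⟩
    exact subset_closure ⟨g, hg, j + k, by simp only [MonoidHom.coe_coe, conj_zpow_conj_zpow]⟩
  have hretract (g : G) : g * (t ^ (f g).toAdd)⁻¹ ∈ W := by
    have hg : g ∈ closure S := hS ▸ mem_top g
    induction hg using closure_induction with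
    | mem g hg => exact subset_closure ⟨g, hg, 0, by simp⟩
    | one => simp
    | mul g h _ _ hg hh =>
      have key : g * h * (t ^ (f (g * h)).toAdd)⁻¹ = g * (t ^ (f g).toAdd)⁻¹ *
          MulAut.conj (t ^ (f g).toAdd) (h * (t ^ (f h).toAdd)⁻¹) := by
        rw [MulAut.conj_apply, map_mul, toAdd_mul, zpow_add]
        group
      rw [key]
      exact mul_mem hg (hconj _ hh)
    | inv g _ hg =>
      have key : g⁻¹ * (t ^ (f g⁻¹).toAdd)⁻¹ =
          MulAut.conj (t ^ (-(f g).toAdd)) (g * (t ^ (f g).toAdd)⁻¹)⁻¹ := by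
        rw [MulAut.conj_apply, map_inv, toAdd_inv, zpow_neg]
        group
      rw [key]
      exact hconj _ (inv_mem hg)
  refine le_antisymm (fun g hg => ?_) ((closure_le _).2 ?_)
  · have hg1 : (f g).toAdd = 0 := by rw [MonoidHom.mem_ker.1 hg, toAdd_one]
    simpa [hg1] using hretract g
  · rintro _ ⟨g, -, k, rfl⟩
    rw [SetLike.mem_coe, MonoidHom.mem_ker, MulAut.conj_apply]
    simp [hft]

theorem exists_conj_zpow_mem_closure_Icc
    (hnofree : ∀ φ : FreeSemigroup Bool →ₙ* G, ¬ Function.Injective φ)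
    {f : G →* Multiplicative ℤ} {t x : G} (ht : f t ≠ 1) (hx : f x = 1) :
    ∃ N : ℕ, ∀ k : ℤ, MulAut.conj (t ^ k) x ∈
      closure ((fun k : ℤ => MulAut.conj (t ^ k) x) '' Set.Icc (-N) N) := by
  obtain ⟨N₁, h₁⟩ := exists_mem_closure_conj_pow_Icc hx ht (not_injective_wordProd hnofree x t)
  obtain ⟨N₂, h₂⟩ := exists_mem_closure_conj_pow_Icc hx (by rwa [map_inv, inv_ne_one])
    (not_injective_wordProd hnofree x t⁻¹)
  refine ⟨max N₁ N₂, conj_zpow_mem_closure_Icc (closure_mono ?_ h₁) (closure_mono ?_ h₂)⟩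
  · rintro _ ⟨n, hn, rfl⟩
    exact ⟨n, ⟨by have := hn.1; omega, by have := hn.2; omega⟩, by simp only [zpow_natCast]⟩
  · rintro _ ⟨n, hn, rfl⟩
    exact ⟨-n, ⟨by have := hn.2; omega, by have := hn.1; omega⟩,
      by simp only [zpow_neg, zpow_natCast, inv_pow]⟩

theorem fg_ker_of_no_free_subsemigroup [Group.FG G]
    (hnofree : ∀ φ : FreeSemigroup Bool →ₙ* G, ¬ Function.Injective φ)
    {f : G →* Multiplicative ℤ} (hf : Function.Surjective f) : Group.FG f.ker := by
  obtain ⟨S, hS, hSfin⟩ := Group.fg_iff.1 ‹_›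
  obtain ⟨t, ht⟩ := hf (Multiplicative.ofAdd 1)
  have ht1 : f t ≠ 1 := by rw [ht]; decide
  have hr (g : G) : f (g * (t ^ (f g).toAdd)⁻¹) = 1 := by
    rw [map_mul, map_inv, map_zpow, ht, ← ofAdd_zsmul, smul_eq_mul, mul_one, ofAdd_toAdd,
      mul_inv_cancel]
  choose N hN using fun g => exists_conj_zpow_mem_closure_Icc hnofree ht1 (hr g)
  set F := ⋃ g ∈ S, (fun k : ℤ => MulAut.conj (t ^ k) (g * (t ^ (f g).toAdd)⁻¹)) ''
    Set.Icc (-(N g : ℤ)) (N g)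
  have hker : f.ker = closure F := by
    refine le_antisymm ?_ ?_
    · rw [ker_eq_closure_conj_zpow ht hS, closure_le]
      rintro _ ⟨g, hg, k, rfl⟩
      exact closure_mono (Set.subset_biUnion_of_mem hg) (hN g k)
    · rw [ker_eq_closure_conj_zpow ht hS]
      refine closure_mono ?_
      intro y hy
      simp only [F, Set.mem_iUnion, Set.mem_image] at hy
      obtain ⟨g, hg, k, -, rfl⟩ := hy
      exact ⟨g, hg, k, rfl⟩
  rw [Group.fg_iff_subgroup_fg, hker]
  exact (fg_iff _).2 ⟨F, rfl, hSfin.biUnion fun g _ => (Set.finite_Icc _ _).image _⟩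

end KernelGenerators

section EndOrbit

variable {F : Type*} [Group F]

def endOrbit (Φ : Set (Monoid.End F)) (R : Set F) : Set F :=
  {w | ∃ φ ∈ Submonoid.closure Φ, ∃ r ∈ R, w = φ r}

variable {Φ : Set (Monoid.End F)} {R : Set F}

theorem endOrbit_mono {R' : Set F} (h : R ⊆ R') : endOrbit Φ R ⊆ endOrbit Φ R' := by
  rintro _ ⟨φ, hφ, r, hr, rfl⟩
  exact ⟨φ, hφ, r, h hr, rfl⟩

theorem subset_endOrbit : R ⊆ endOrbit Φ R := fun r hr => ⟨1, one_mem _, r, hr, rfl⟩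

theorem mapsTo_endOrbit {φ : Monoid.End F} (hφ : φ ∈ Φ) :
    Set.MapsTo φ (endOrbit Φ R) (endOrbit Φ R) := by
  rintro _ ⟨ψ, hψ, r, hr, rfl⟩
  exact ⟨φ * ψ, mul_mem (Submonoid.subset_closure hφ) hψ, r, hr, rfl⟩

theorem endOrbit_subset {S : Set F} (hR : R ⊆ S) (hΦ : ∀ φ ∈ Φ, Set.MapsTo φ S S) :
    endOrbit Φ R ⊆ S := by
  rintro _ ⟨ψ, hψ, r, hr, rfl⟩
  suffices Set.MapsTo ψ S S from this (hR hr)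
  induction hψ using Submonoid.closure_induction with
  | mem φ hφ => exact hΦ φ hφ
  | one => exact Set.mapsTo_id S
  | mul φ ψ _ _ hφ hψ => exact hφ.comp hψ

theorem normalClosure_endOrbit_le_ker {K : Type*} [Group K] {π : F →* K}
    (hR : R ⊆ π.ker) (hΦ : ∀ φ ∈ Φ, ∀ w, π w = 1 → π (φ w) = 1) :
    normalClosure (endOrbit Φ R) ≤ π.ker :=
  normalClosure_le_normal (endOrbit_subset hR hΦ)

theorem normalClosure_endOrbit_le_comap {φ : Monoid.End F} (hφ : φ ∈ Φ) :
    normalClosure (endOrbit Φ R) ≤ (normalClosure (endOrbit Φ R)).comap φ :=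
  have : ((normalClosure (endOrbit Φ R)).comap φ).Normal := normalClosure_normal.comap _
  normalClosure_le_normal fun _ hw => subset_normalClosure (mapsTo_endOrbit hφ hw)

theorem HasAscendingFiniteLPresentation.of_ker_eq {K : Type*} [Group K] {n : ℕ}
    {π : FreeGroup (Fin n) →* K} (hπ : Function.Surjective π)
    {Φ : Set (Monoid.End (FreeGroup (Fin n)))} {R : Set (FreeGroup (Fin n))} (hΦ : Φ.Finite)
    (hR : R.Finite) (hker : π.ker = normalClosure (endOrbit Φ R)) :
    HasAscendingFiniteLPresentation K := by
  refine ⟨n, hR.toFinset, hΦ.toFinset,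
    ⟨(QuotientGroup.quotientKerEquivOfSurjective π hπ).symm.trans
      (QuotientGroup.quotientMulEquivOfEq ?_)⟩⟩
  simpa [endOrbit] using hker

end EndOrbit

section InverseRelators

variable {X : Type*}

def inverseRelators (φ₁ φ₂ : Monoid.End (FreeGroup X)) : Set (FreeGroup X) :=
  (Set.range fun x => φ₁ (φ₂ (FreeGroup.of x)) * (FreeGroup.of x)⁻¹) ∪
    Set.range fun x => φ₂ (φ₁ (FreeGroup.of x)) * (FreeGroup.of x)⁻¹

abbrev inverseRelations (φ₁ φ₂ : Monoid.End (FreeGroup X)) : Subgroup (FreeGroup X) :=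
  normalClosure (endOrbit {φ₁, φ₂} (inverseRelators φ₁ φ₂))

def inverseRelationsMulAut (φ₁ φ₂ : Monoid.End (FreeGroup X)) :
    MulAut (FreeGroup X ⧸ inverseRelations φ₁ φ₂) :=
  have hmk {w w' : FreeGroup X} (h : w' * w⁻¹ ∈ inverseRelators φ₁ φ₂) :
      (w' : FreeGroup X ⧸ inverseRelations φ₁ φ₂) = w := by
    rw [QuotientGroup.eq_iff_div_mem, div_eq_mul_inv]
    exact subset_normalClosure (subset_endOrbit h)
  MonoidHom.toMulEquiv
    (QuotientGroup.map _ _ φ₁ (normalClosure_endOrbit_le_comap (by simp)))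
    (QuotientGroup.map _ _ φ₂ (normalClosure_endOrbit_le_comap (by simp)))
    (QuotientGroup.monoidHom_ext _ (FreeGroup.ext_hom _ _ fun x => hmk (Or.inr ⟨x, rfl⟩)))
    (QuotientGroup.monoidHom_ext _ (FreeGroup.ext_hom _ _ fun x => hmk (Or.inl ⟨x, rfl⟩)))

variable {φ₁ φ₂ : Monoid.End (FreeGroup X)}

theorem inverseRelationsMulAut_mk (w : FreeGroup X) :
    inverseRelationsMulAut φ₁ φ₂ w = (φ₁ w : FreeGroup X ⧸ inverseRelations φ₁ φ₂) := rfl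

theorem inverseRelationsMulAut_inv_mk (w : FreeGroup X) :
    (inverseRelationsMulAut φ₁ φ₂)⁻¹ w = (φ₂ w : FreeGroup X ⧸ inverseRelations φ₁ φ₂) := rfl

theorem normalClosure_endOrbit_inverseRelators_union_le_ker {K : Type*} [Group K]
    {π : FreeGroup X →* K} {σ : MulAut K} (h₁ : ∀ w, π (φ₁ w) = σ (π w))
    (h₂ : ∀ w, π (φ₂ w) = σ⁻¹ (π w)) {R : Set (FreeGroup X)} (hR : R ⊆ π.ker) :
    normalClosure (endOrbit {φ₁, φ₂} (inverseRelators φ₁ φ₂ ∪ R)) ≤ π.ker := by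
  refine normalClosure_endOrbit_le_ker (Set.union_subset ?_ hR) ?_
  · rintro _ (⟨x, rfl⟩ | ⟨x, rfl⟩) <;> simp [h₁, h₂]
  · rintro φ (rfl | rfl) w hw <;> simp [h₁, h₂, hw]

theorem inverseRelationsMulAut_zpow_apply_mem (R : Set (FreeGroup X)) (n : ℤ) :
    ∀ m ∈ (normalClosure (endOrbit {φ₁, φ₂} R)).map (QuotientGroup.mk' (inverseRelations φ₁ φ₂)),
      (inverseRelationsMulAut φ₁ φ₂ ^ n) m ∈
        (normalClosure (endOrbit {φ₁, φ₂} R)).map (QuotientGroup.mk' _) := by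
  refine MulAut.zpow_apply_mem ?_ ?_ n
  · rintro _ ⟨w, hw, rfl⟩
    exact ⟨φ₁ w, normalClosure_endOrbit_le_comap (by simp) hw, (inverseRelationsMulAut_mk w).symm⟩
  · rintro _ ⟨w, hw, rfl⟩
    exact ⟨φ₂ w, normalClosure_endOrbit_le_comap (by simp) hw,
      (inverseRelationsMulAut_inv_mk w).symm⟩

end InverseRelators

theorem exists_finite_ker_eq_normalClosure_endOrbit {K X : Type*} [Group K] [Finite X]
    (α : Multiplicative ℤ →* MulAut K) [Group.IsFinitelyPresented (K ⋊[α] Multiplicative ℤ)]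
    {π : FreeGroup X →* K} (hπ : Function.Surjective π) {φ₁ φ₂ : Monoid.End (FreeGroup X)}
    (h₁ : ∀ w, π (φ₁ w) = α (.ofAdd 1) (π w)) (h₂ : ∀ w, π (φ₂ w) = (α (.ofAdd 1))⁻¹ (π w)) :
    ∃ R : Set (FreeGroup X), R.Finite ∧ π.ker = normalClosure (endOrbit {φ₁, φ₂} R) := by
  set N := inverseRelations φ₁ φ₂
  set β := inverseRelationsMulAut φ₁ φ₂
  have hN : N ≤ π.ker := by
    simpa using normalClosure_endOrbit_inverseRelators_union_le_ker h₁ h₂ (Set.empty_subset _)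
  set θ := QuotientGroup.lift N π hN
  have hθ : Function.Surjective θ := QuotientGroup.lift_surjective_of_surjective _ _ hπ _
  have hθβ (q) : θ (β q) = α (.ofAdd 1) (θ q) :=
    QuotientGroup.induction_on q fun w => h₁ w
  obtain ⟨T, hTfin, hTker, hmin⟩ := exists_finite_ker_le_of_invariant_normal
    (ψ := zpowersHom _ β) (α := α) hθ fun g q => by
      rw [zpowersHom_apply, MonoidHom.apply_mint _ α g]
      exact θ.apply_zpow_apply_of_apply hθβ _ q
  set R₂ := Function.surjInv (QuotientGroup.mk_surjective (s := N)) '' T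
  have hR₂ : R₂ ⊆ π.ker := by
    rintro _ ⟨t, ht, rfl⟩
    have : θ t = 1 := hTker ht
    rw [← Function.surjInv_eq (QuotientGroup.mk_surjective (s := N)) t, QuotientGroup.lift_mk]
      at this
    exact this
  refine ⟨inverseRelators φ₁ φ₂ ∪ R₂,
    ((Set.finite_range _).union (Set.finite_range _)).union (hTfin.image _),
    le_antisymm ?_ (normalClosure_endOrbit_inverseRelators_union_le_ker h₁ h₂ hR₂)⟩
  set M := (normalClosure (endOrbit {φ₁, φ₂} R₂)).map (QuotientGroup.mk' N)
  have hM : θ.ker ≤ M := by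
    refine hmin M (normalClosure_normal.map _ (QuotientGroup.mk'_surjective N)) ?_ ?_
    · exact fun g => inverseRelationsMulAut_zpow_apply_mem R₂ _
    · intro t ht
      exact ⟨_, subset_normalClosure (subset_endOrbit ⟨t, ht, rfl⟩), Function.surjInv_eq _ t⟩
  intro w hw
  have hwM : QuotientGroup.mk' N w ∈ M := hM (by simpa [θ] using hw)
  rw [← mem_comap, comap_map_eq, QuotientGroup.ker_mk'] at hwM
  exact sup_le (normalClosure_mono (endOrbit_mono Set.subset_union_right))
    (normalClosure_mono (endOrbit_mono Set.subset_union_left)) hwM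

theorem HasAscendingFiniteLPresentation.of_semidirectProduct {K : Type*} [Group K] [Group.FG K]
    (α : Multiplicative ℤ →* MulAut K) [Group.IsFinitelyPresented (K ⋊[α] Multiplicative ℤ)] :
    HasAscendingFiniteLPresentation K := by
  obtain ⟨n, π, hπ⟩ := Group.FG.exists_freeGroup_fin_surjective (G := K)
  obtain ⟨φ₁, h₁⟩ := FreeGroup.exists_comp_eq_of_surjective hπ
    ((α (.ofAdd 1)).toMonoidHom.comp π)
  obtain ⟨φ₂, h₂⟩ := FreeGroup.exists_comp_eq_of_surjective hπ
    ((α (.ofAdd 1))⁻¹.toMonoidHom.comp π)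
  obtain ⟨R, hR, hker⟩ := exists_finite_ker_eq_normalClosure_endOrbit α hπ (φ₁ := φ₁) (φ₂ := φ₂)
    (DFunLike.congr_fun h₁) (DFunLike.congr_fun h₂)
  exact .of_ker_eq hπ ((Set.finite_singleton _).insert _) hR hker

/-- **Theorem 2.** A finitely presented indicable group with no free subsemigroup of
rank 2 is a semidirect product `H ⋊ ℤ` where `H` has an ascending finite endomorphic
presentation. -/
theorem semidirect_LPresentation_of_fp_indicable_no_free_subsemigroup {G : Type*}
    [Group G] (hG : IsFinitelyPresentedGroup G)
    (hind : ∃ f : G →* Multiplicative ℤ, Function.Surjective f)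
    (hnofree : ∀ φ : FreeSemigroup Bool →ₙ* G, ¬ Function.Injective φ) :
    ∃ (H : Subgroup G) (φ : Multiplicative ℤ →* MulAut H),
      HasAscendingFiniteLPresentation H ∧
      Nonempty (G ≃* H ⋊[φ] Multiplicative ℤ) := by
  obtain ⟨f, hf⟩ := hind
  obtain ⟨t, ht⟩ := hf (.ofAdd 1)
  have : Group.IsFinitelyPresented G := hG.isFinitelyPresented
  have : Group.FG G := Group.IsFinitelyPresented.fg
  have : Group.FG f.ker := fg_ker_of_no_free_subsemigroup hnofree hf
  let e := f.kerSemidirectProductMulEquiv (zpowersHom G t) fun n => by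
    rw [zpowersHom_apply, map_zpow, ht, ← ofAdd_zsmul, smul_eq_mul, mul_one, ofAdd_toAdd]
  have := Group.IsFinitelyPresented.equiv e.symm
  exact ⟨f.ker, _, .of_semidirectProduct (MulAut.conjNormal.comp (zpowersHom G t)), ⟨e.symm⟩⟩
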